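/- arXiv:2506.06044 — 2 statements merged into one kernel-verified Lean document; each statement's English description precedes it below -/
import Mathlib

section
/- Let G be a simple graph on a vertex type V, let v ∈ V, let N₁ and N₂ be disjoint sets with N₁ ∪ N₂ = N_G(v), and let G' be the exclusive-split graph of G at v determined by (N₁, N₂). Suppose u ∈ V with u ≠ v is such that inl u is a claw center in G' but u is not a claw center in G. Then u ∈ N_G(v), and there exists a vertex a ∈ N_G(v) ∩ N_G(u) such that u and a lie in different parts of the split (u ∈ N₁ and a ∈ N₂, or u ∈ N₂ and a ∈ N₁); that is, the split removed an edge (namely between a and the copy of v adjacent to u) inside the neighborhood of u. -/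
/-- A vertex `u` of `H` is a claw center if it has three distinct pairwise
non-adjacent neighbors. -/
def IsClawCenter {W : Type*} (H : SimpleGraph W) (u : W) : Prop :=
  ∃ a b c : W, a ≠ b ∧ a ≠ c ∧ b ≠ c ∧
    H.Adj u a ∧ H.Adj u b ∧ H.Adj u c ∧
    ¬ H.Adj a b ∧ ¬ H.Adj a c ∧ ¬ H.Adj b c

/-- The exclusive-split graph of `G` at `v` determined by `(N₁, N₂)`: the graph
on `V ⊕ Unit` where `Sum.inl v` plays the role of the copy `v₁` (adjacent to
`N₁`) and `Sum.inr ()` the role of the copy `v₂` (adjacent to `N₂`), and all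
other adjacencies among vertices different from `v` are as in `G`. -/
def splitGraph {V : Type*} (G : SimpleGraph V) (v : V) (N₁ N₂ : Set V) :
    SimpleGraph (V ⊕ Unit) where
  Adj x y :=
    match x, y with
    | Sum.inl u, Sum.inl w =>
        (u ≠ v ∧ w ≠ v ∧ G.Adj u w) ∨ (u = v ∧ w ≠ v ∧ w ∈ N₁) ∨
          (u ≠ v ∧ w = v ∧ u ∈ N₁)
    | Sum.inl u, Sum.inr _ => u ≠ v ∧ u ∈ N₂
    | Sum.inr _, Sum.inl u => u ≠ v ∧ u ∈ N₂
    | Sum.inr _, Sum.inr _ => False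
  symm := by
    constructor
    rintro (u | u) (w | w) h
    · rcases h with ⟨h1, h2, h3⟩ | ⟨h1, h2, h3⟩ | ⟨h1, h2, h3⟩
      · exact Or.inl ⟨h2, h1, h3.symm⟩
      · exact Or.inr (Or.inr ⟨h2, h1, h3⟩)
      · exact Or.inr (Or.inl ⟨h2, h1, h3⟩)
    · exact h
    · exact h
    · exact h.elim
  loopless := by
    constructor
    rintro (u | u) h
    · rcases h with ⟨h1, h2, h3⟩ | ⟨h1, h2, h3⟩ | ⟨h1, h2, h3⟩
      · exact G.loopless.irrefl u h3
      · exact h2 h1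
      · exact h1 h2
    · exact h

/-!
Merging the two copies of `v` back into `v` is a homomorphism `G' →g G`, and it is injective on
the neighbourhood of `inl u` because, the parts being disjoint, `inl u` sees at most one copy.
It therefore maps a claw at `inl u` to a claw at `u`, unless some non-edge of the claw becomes an
edge of `G`; such an edge joins a copy of `v` to a common neighbour of `u` and `v` that lies in
the other part than `u`.
-/

namespace splitGraph

open Sum

variable {V : Type*} {G : SimpleGraph V} {v : V} {N₁ N₂ : Set V}

def merge (v : V) : V ⊕ Unit → V :=
  Sum.elim id fun _ => v

lemma eq_inl_of_merge_ne {x : V ⊕ Unit} (hx : merge v x ≠ v) : x = inl (merge v x) := by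
  rcases x with a | ⟨⟩
  · rfl
  · exact absurd rfl hx

lemma adj_inl_inl_iff {a b : V} (ha : a ≠ v) (hb : b ≠ v) :
    (splitGraph G v N₁ N₂).Adj (inl a) (inl b) ↔ G.Adj a b := by
  simp [splitGraph, ha, hb]

lemma adj_inl_split_iff {a : V} (ha : a ≠ v) :
    (splitGraph G v N₁ N₂).Adj (inl a) (inl v) ↔ a ∈ N₁ := by
  simp [splitGraph, ha]

lemma adj_inl_inr_iff {a : V} :
    (splitGraph G v N₁ N₂).Adj (inl a) (inr ()) ↔ a ≠ v ∧ a ∈ N₂ := Iff.rfl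

def mergeHom (h₁ : N₁ ⊆ G.neighborSet v) (h₂ : N₂ ⊆ G.neighborSet v) :
    splitGraph G v N₁ N₂ →g G where
  toFun := merge v
  map_rel' := by
    rintro (a | ⟨⟩) (b | ⟨⟩) h
    · rcases h with ⟨-, -, h⟩ | ⟨rfl, -, hb⟩ | ⟨-, rfl, ha⟩
      exacts [h, h₁ hb, (h₁ ha).symm]
    · exact (h₂ h.2).symm
    · exact h₂ h.2
    · exact h.elim

lemma merge_injOn_neighborSet (hdisj : Disjoint N₁ N₂) {u : V} (hu : u ≠ v) :
    Set.InjOn (merge v) ((splitGraph G v N₁ N₂).neighborSet (inl u)) := by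
  have copies : ¬ ((splitGraph G v N₁ N₂).Adj (inl u) (inl v) ∧
      (splitGraph G v N₁ N₂).Adj (inl u) (inr ())) := fun ⟨h₁, h₂⟩ =>
    hdisj.notMem_of_mem_left ((adj_inl_split_iff hu).1 h₁) (adj_inl_inr_iff.1 h₂).2
  rintro (a | ⟨⟩) ha (b | ⟨⟩) hb h
  · exact congrArg inl h
  · obtain rfl : a = v := h
    exact (copies ⟨ha, hb⟩).elim
  · obtain rfl : b = v := h.symm
    exact (copies ⟨hb, ha⟩).elim
  · rfl

lemma mem_parts_of_not_adj_copy (hcover : G.neighborSet v ⊆ N₁ ∪ N₂) {u w : V} (hu : u ≠ v)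
    {x : V ⊕ Unit} (hx : (splitGraph G v N₁ N₂).Adj (inl u) x) (hxv : merge v x = v)
    (hvw : G.Adj v w) (hxw : ¬ (splitGraph G v N₁ N₂).Adj x (inl w)) :
    (u ∈ N₁ ∧ w ∈ N₂) ∨ (u ∈ N₂ ∧ w ∈ N₁) := by
  have hw : w ≠ v := hvw.ne'
  rcases x with a | ⟨⟩
  · obtain rfl : a = v := hxv
    have hw₁ : w ∉ N₁ := fun h => hxw (((adj_inl_split_iff hw).2 h).symm)
    exact .inl ⟨(adj_inl_split_iff hu).1 hx, (hcover hvw).resolve_left hw₁⟩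
  · have hw₂ : w ∉ N₂ := fun h => hxw (adj_inl_inr_iff.2 ⟨hw, h⟩).symm
    exact .inr ⟨(adj_inl_inr_iff.1 hx).2, (hcover hvw).resolve_right hw₂⟩

lemma exists_of_adj_merge_of_not_adj (h₁ : N₁ ⊆ G.neighborSet v) (h₂ : N₂ ⊆ G.neighborSet v)
    (hcover : G.neighborSet v ⊆ N₁ ∪ N₂) {u : V} (hu : u ≠ v) {x y : V ⊕ Unit}
    (hx : (splitGraph G v N₁ N₂).Adj (inl u) x) (hy : (splitGraph G v N₁ N₂).Adj (inl u) y)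
    (hxy : G.Adj (merge v x) (merge v y)) (hnxy : ¬ (splitGraph G v N₁ N₂).Adj x y) :
    ∃ a, G.Adj v a ∧ G.Adj u a ∧ ((u ∈ N₁ ∧ a ∈ N₂) ∨ (u ∈ N₂ ∧ a ∈ N₁)) := by
  wlog hxv : merge v x = v generalizing x y
  · have hyv : merge v y = v := by
      by_contra hyv
      rw [eq_inl_of_merge_ne hxv, eq_inl_of_merge_ne hyv, adj_inl_inl_iff hxv hyv] at hnxy
      exact hnxy hxy
    exact this hy hx hxy.symm (fun h => hnxy h.symm) hyv
  rw [hxv] at hxy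
  have hy' : y = inl (merge v y) := eq_inl_of_merge_ne hxy.ne'
  refine ⟨merge v y, hxy, (mergeHom h₁ h₂).map_adj hy, ?_⟩
  rw [hy'] at hnxy
  exact mem_parts_of_not_adj_copy hcover hu hx hxv hxy hnxy

end splitGraph

/-- If `Sum.inl u` (with `u ≠ v`) is a claw center in the exclusive-split graph
but `u` is not a claw center in `G`, then `u ∈ N_G(v)` and there is a vertex
`a ∈ N_G(v) ∩ N_G(u)` lying in the other part of the split than `u`; i.e. the
split removed an edge inside the neighborhood of `u`. -/
theorem new_claw_center_from_removed_edge {V : Type*} (G : SimpleGraph V)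
    (v : V) (N₁ N₂ : Set V)
    (hdisj : Disjoint N₁ N₂) (hunion : N₁ ∪ N₂ = G.neighborSet v)
    (u : V) (huv : u ≠ v)
    (hnew : IsClawCenter (splitGraph G v N₁ N₂) (Sum.inl u))
    (hold : ¬ IsClawCenter G u) :
    u ∈ G.neighborSet v ∧
      ∃ a : V, a ∈ G.neighborSet v ∧ a ∈ G.neighborSet u ∧
        ((u ∈ N₁ ∧ a ∈ N₂) ∨ (u ∈ N₂ ∧ a ∈ N₁)) := by
  have h₁ : N₁ ⊆ G.neighborSet v := hunion ▸ Set.subset_union_left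
  have h₂ : N₂ ⊆ G.neighborSet v := hunion ▸ Set.subset_union_right
  obtain ⟨a, b, c, hab, hac, hbc, hua, hub, huc, nab, nac, nbc⟩ := hnew
  have removed : ∃ w, G.Adj v w ∧ G.Adj u w ∧ ((u ∈ N₁ ∧ w ∈ N₂) ∨ (u ∈ N₂ ∧ w ∈ N₁)) := by
    by_contra hnone
    have hinj := splitGraph.merge_injOn_neighborSet (G := G) hdisj huv
    have merge_not_adj {x y} (hx : (splitGraph G v N₁ N₂).Adj (Sum.inl u) x)
        (hy : (splitGraph G v N₁ N₂).Adj (Sum.inl u) y)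
        (hxy : ¬ (splitGraph G v N₁ N₂).Adj x y) :
        ¬ G.Adj (splitGraph.merge v x) (splitGraph.merge v y) := fun h =>
      hnone (splitGraph.exists_of_adj_merge_of_not_adj h₁ h₂ hunion.ge huv hx hy h hxy)
    let f := splitGraph.mergeHom h₁ h₂
    exact hold ⟨f a, f b, f c, hinj.ne hua hub hab, hinj.ne hua huc hac, hinj.ne hub huc hbc,
      f.map_adj hua, f.map_adj hub, f.map_adj huc,
      merge_not_adj hua hub nab, merge_not_adj hua huc nac,
      merge_not_adj hub huc nbc⟩
  obtain ⟨w, hvw, huw, hparts⟩ := removed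
  exact ⟨hunion ▸ hparts.imp And.left And.left, w, hvw, huw, hparts⟩
end

section
/- Let G be a simple graph on a vertex type V, let v ∈ V, let N₁ and N₂ be disjoint sets with N₁ ∪ N₂ = N_G(v), and let G' be the exclusive-split graph of G at v determined by (N₁, N₂). Suppose the split preserves the connected components of the subgraph induced by N_G(v): for all a, b ∈ N_G(v), if a and b lie in the same connected component of the induced subgraph G[N_G(v)], then a ∈ N₁ ↔ b ∈ N₁. Then no new claw centers are created: if inl u (for u ∈ V, u ≠ v) is a claw center in G', then u is a claw center in G; and if inl v or inr () is a claw center in G', then v is a claw center in G. -/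
/-! Identifying the two copies of `v` is a graph homomorphism from the split graph onto `G`, and a
homomorphism carries a claw at `x` to a claw at the image of `x` as soon as it is injective on the
neighbourhood of `x` and reflects adjacency there. The neighbours of either copy of `v` are
original vertices other than `v`, on which the homomorphism is an induced embedding. Any other
vertex `u` is adjacent to at most one copy, as `N₁` and `N₂` are disjoint; and a neighbour `w`
of `u` that is adjacent to `v` in `G` lies in the same part as `u`, because `uw` is an edge of
`G[N(v)]`, so `w` is adjacent to the same copy as `u`. -/

theorem IsClawCenter.map {W W' : Type*} {H : SimpleGraph W} {G : SimpleGraph W'} (φ : H →g G)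
    {x : W} (hinj : Set.InjOn φ (H.neighborSet x))
    (hrefl : ∀ a ∈ H.neighborSet x, ∀ b ∈ H.neighborSet x, G.Adj (φ a) (φ b) → H.Adj a b)
    (hx : IsClawCenter H x) : IsClawCenter G (φ x) := by
  obtain ⟨a, b, c, hab, hac, hbc, ha, hb, hc, nab, nac, nbc⟩ := hx
  exact ⟨φ a, φ b, φ c, hinj.ne ha hb hab, hinj.ne ha hc hac, hinj.ne hb hc hbc,
    φ.map_adj ha, φ.map_adj hb, φ.map_adj hc,
    mt (hrefl a ha b hb) nab, mt (hrefl a ha c hc) nac, mt (hrefl b hb c hc) nbc⟩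

section splitGraph

variable {V : Type*} {G : SimpleGraph V} {v : V} {N₁ N₂ : Set V}

@[simp]
theorem splitGraph_adj_inl_inl {u w : V} (hu : u ≠ v) (hw : w ≠ v) :
    (splitGraph G v N₁ N₂).Adj (.inl u) (.inl w) ↔ G.Adj u w := by
  simp [splitGraph, hu, hw]

@[simp]
theorem splitGraph_adj_inl_self {u : V} :
    (splitGraph G v N₁ N₂).Adj (.inl u) (.inl v) ↔ u ≠ v ∧ u ∈ N₁ := by
  simp [splitGraph]

@[simp]
theorem splitGraph_adj_inl_inr {u : V} {z : Unit} :
    (splitGraph G v N₁ N₂).Adj (.inl u) (.inr z) ↔ u ≠ v ∧ u ∈ N₂ :=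
  Iff.rfl

@[simp]
theorem splitGraph_not_adj_inr_inr {z z' : Unit} :
    ¬ (splitGraph G v N₁ N₂).Adj (.inr z) (.inr z') :=
  id

/-- The copies of `v` in the split graph are exactly the `x` with `proj v x = v`. -/
def splitGraph.proj (v : V) : V ⊕ Unit → V :=
  Sum.elim id fun _ => v

theorem splitGraph.adj_proj_of_adj (h : N₁ ∪ N₂ ⊆ G.neighborSet v) {x y : V ⊕ Unit}
    (hxy : (splitGraph G v N₁ N₂).Adj x y) : G.Adj (splitGraph.proj v x) (splitGraph.proj v y) := by
  rcases x with u | z <;> rcases y with w | z'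
  · rcases hxy with ⟨-, -, hxy⟩ | ⟨rfl, -, hw⟩ | ⟨-, rfl, hu⟩
    · exact hxy
    · exact h (Or.inl hw)
    · exact (h (Or.inl hu)).symm
  · exact (h (Or.inr (splitGraph_adj_inl_inr.1 hxy).2)).symm
  · exact h (Or.inr (splitGraph_adj_inl_inr.1 hxy.symm).2)
  · exact absurd hxy splitGraph_not_adj_inr_inr

def splitGraph.projHom (h : N₁ ∪ N₂ ⊆ G.neighborSet v) : splitGraph G v N₁ N₂ →g G :=
  ⟨splitGraph.proj v, splitGraph.adj_proj_of_adj h⟩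

theorem splitGraph.eq_inl_proj {x : V ⊕ Unit} (hx : splitGraph.proj v x ≠ v) :
    x = .inl (splitGraph.proj v x) := by
  rcases x with u | z
  · rfl
  · exact absurd rfl hx

theorem splitGraph.proj_injOn : Set.InjOn (splitGraph.proj v) {x | splitGraph.proj v x ≠ v} :=
  fun x hx y hy hxy => by rw [splitGraph.eq_inl_proj hx, splitGraph.eq_inl_proj hy, hxy]

theorem splitGraph_adj_of_adj_proj {x y : V ⊕ Unit} (hx : splitGraph.proj v x ≠ v)
    (hy : splitGraph.proj v y ≠ v) (hxy : G.Adj (splitGraph.proj v x) (splitGraph.proj v y)) :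
    (splitGraph G v N₁ N₂).Adj x y := by
  rw [splitGraph.eq_inl_proj hx, splitGraph.eq_inl_proj hy]
  exact (splitGraph_adj_inl_inl hx hy).2 hxy

theorem splitGraph_proj_ne_of_adj_inl_self {x : V ⊕ Unit}
    (hx : (splitGraph G v N₁ N₂).Adj (.inl v) x) : splitGraph.proj v x ≠ v := by
  rcases x with w | z
  · exact (splitGraph_adj_inl_self.1 hx.symm).1
  · exact absurd rfl (splitGraph_adj_inl_inr.1 hx).1

theorem splitGraph_proj_ne_of_adj_inr {z : Unit} {x : V ⊕ Unit}
    (hx : (splitGraph G v N₁ N₂).Adj (.inr z) x) : splitGraph.proj v x ≠ v := by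
  rcases x with w | z'
  · exact (splitGraph_adj_inl_inr.1 hx.symm).1
  · exact absurd hx splitGraph_not_adj_inr_inr

theorem isClawCenter_of_isClawCenter_splitGraph_copy (h : N₁ ∪ N₂ ⊆ G.neighborSet v)
    {c : V ⊕ Unit} (hc : splitGraph.proj v c = v)
    (hnbr : ∀ x, (splitGraph G v N₁ N₂).Adj c x → splitGraph.proj v x ≠ v)
    (hclaw : IsClawCenter (splitGraph G v N₁ N₂) c) : IsClawCenter G v :=
  hc ▸ hclaw.map (splitGraph.projHom h) (splitGraph.proj_injOn.mono hnbr)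
    fun _ ha _ hb => splitGraph_adj_of_adj_proj (hnbr _ ha) (hnbr _ hb)

theorem splitGraph_eq_of_adj_inl_of_proj_eq (hdisj : Disjoint N₁ N₂) {u : V} {x y : V ⊕ Unit}
    (hx : splitGraph.proj v x = v) (hy : splitGraph.proj v y = v)
    (hux : (splitGraph G v N₁ N₂).Adj (.inl u) x) (huy : (splitGraph G v N₁ N₂).Adj (.inl u) y) :
    x = y := by
  rcases x with x | z <;> rcases y with y | z'
  · exact congrArg Sum.inl (hx.trans hy.symm)
  · obtain rfl : x = v := hx
    exact absurd (splitGraph_adj_inl_inr.1 huy).2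
      (hdisj.notMem_of_mem_left (splitGraph_adj_inl_self.1 hux).2)
  · obtain rfl : y = v := hy
    exact absurd (splitGraph_adj_inl_inr.1 hux).2
      (hdisj.notMem_of_mem_left (splitGraph_adj_inl_self.1 huy).2)
  · rfl

theorem splitGraph.proj_injOn_neighborSet_inl (hdisj : Disjoint N₁ N₂) (u : V) :
    Set.InjOn (splitGraph.proj v) ((splitGraph G v N₁ N₂).neighborSet (.inl u)) := by
  intro x hx y hy hxy
  by_cases hxv : splitGraph.proj v x = v
  · exact splitGraph_eq_of_adj_inl_of_proj_eq hdisj hxv (hxy ▸ hxv) hx hy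
  · exact splitGraph.proj_injOn hxv (hxy ▸ hxv : splitGraph.proj v y ≠ v) hxy

theorem splitGraph_adj_copy_of_adj (hdisj : Disjoint N₁ N₂) (h : N₁ ∪ N₂ = G.neighborSet v)
    (hN : ∀ a b, G.Adj v a → G.Adj v b → G.Adj a b → (a ∈ N₁ ↔ b ∈ N₁))
    {u w : V} {c : V ⊕ Unit} (hc : splitGraph.proj v c = v) (huw : G.Adj u w) (hwv : G.Adj w v)
    (huc : (splitGraph G v N₁ N₂).Adj (.inl u) c) : (splitGraph G v N₁ N₂).Adj (.inl w) c := by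
  have hvu : G.Adj v u := (hc ▸ splitGraph.adj_proj_of_adj h.subset huc).symm
  have hside := hN u w hvu hwv.symm huw
  rcases c with c | z
  · obtain rfl : c = v := hc
    exact splitGraph_adj_inl_self.2 ⟨hwv.ne, hside.1 (splitGraph_adj_inl_self.1 huc).2⟩
  · have hu : u ∈ N₂ := (splitGraph_adj_inl_inr.1 huc).2
    have hw : w ∈ N₁ ∪ N₂ := h ▸ hwv.symm
    refine splitGraph_adj_inl_inr.2 ⟨hwv.ne, hw.resolve_left fun hw₁ => ?_⟩
    exact hdisj.notMem_of_mem_left (hside.2 hw₁) hu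

theorem splitGraph_adj_of_adj_inl_of_adj_proj (hdisj : Disjoint N₁ N₂)
    (h : N₁ ∪ N₂ = G.neighborSet v)
    (hN : ∀ a b, G.Adj v a → G.Adj v b → G.Adj a b → (a ∈ N₁ ↔ b ∈ N₁))
    {u : V} (hu : u ≠ v) {x y : V ⊕ Unit} (hux : (splitGraph G v N₁ N₂).Adj (.inl u) x)
    (huy : (splitGraph G v N₁ N₂).Adj (.inl u) y)
    (hxy : G.Adj (splitGraph.proj v x) (splitGraph.proj v y)) : (splitGraph G v N₁ N₂).Adj x y := by
  by_cases hxv : splitGraph.proj v x = v <;> by_cases hyv : splitGraph.proj v y = v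
  · rw [hxv, hyv] at hxy
    exact absurd hxy (G.loopless.irrefl v)
  · rw [splitGraph.eq_inl_proj hyv] at huy ⊢
    exact (splitGraph_adj_copy_of_adj hdisj h hN hxv ((splitGraph_adj_inl_inl hu hyv).1 huy)
      (by rw [hxv] at hxy; exact hxy.symm) hux).symm
  · rw [splitGraph.eq_inl_proj hxv] at hux ⊢
    exact splitGraph_adj_copy_of_adj hdisj h hN hyv ((splitGraph_adj_inl_inl hu hxv).1 hux)
      (by rwa [hyv] at hxy) huy
  · exact splitGraph_adj_of_adj_proj hxv hyv hxy

theorem isClawCenter_of_isClawCenter_splitGraph_inl (hdisj : Disjoint N₁ N₂)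
    (h : N₁ ∪ N₂ = G.neighborSet v)
    (hN : ∀ a b, G.Adj v a → G.Adj v b → G.Adj a b → (a ∈ N₁ ↔ b ∈ N₁))
    {u : V} (hu : u ≠ v) (hclaw : IsClawCenter (splitGraph G v N₁ N₂) (.inl u)) :
    IsClawCenter G u :=
  hclaw.map (splitGraph.projHom h.subset) (splitGraph.proj_injOn_neighborSet_inl hdisj u)
    fun _ ha _ hb => splitGraph_adj_of_adj_inl_of_adj_proj hdisj h hN hu ha hb

end splitGraph

/-- If the exclusive split of `v` preserves the connected components of the
subgraph induced by `N(v)` (vertices in the same component of `G[N(v)]` go to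
the same part), then the split creates no new claw centers: every claw center
of the split graph comes from a claw center of `G`. -/
theorem component_preserving_split_creates_no_claw_centers {V : Type*}
    (G : SimpleGraph V) (v : V) (N₁ N₂ : Set V)
    (hdisj : Disjoint N₁ N₂) (hunion : N₁ ∪ N₂ = G.neighborSet v)
    (hcomp : ∀ a b : ↥(G.neighborSet v),
      (G.induce (G.neighborSet v)).Reachable a b → ((a : V) ∈ N₁ ↔ (b : V) ∈ N₁)) :
    (∀ u : V, u ≠ v →
        IsClawCenter (splitGraph G v N₁ N₂) (Sum.inl u) → IsClawCenter G u) ∧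
    (IsClawCenter (splitGraph G v N₁ N₂) (Sum.inl v) → IsClawCenter G v) ∧
    (IsClawCenter (splitGraph G v N₁ N₂) (Sum.inr ()) → IsClawCenter G v) := by
  have hN : ∀ a b, G.Adj v a → G.Adj v b → G.Adj a b → (a ∈ N₁ ↔ b ∈ N₁) :=
    fun a b ha hb hab => hcomp ⟨a, ha⟩ ⟨b, hb⟩ (SimpleGraph.induce_adj.2 hab).reachable
  exact ⟨fun u hu => isClawCenter_of_isClawCenter_splitGraph_inl hdisj hunion hN hu,
    isClawCenter_of_isClawCenter_splitGraph_copy hunion.subset rfl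
      fun _ => splitGraph_proj_ne_of_adj_inl_self,
    isClawCenter_of_isClawCenter_splitGraph_copy hunion.subset rfl
      fun _ => splitGraph_proj_ne_of_adj_inr⟩
end
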